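/- Under the ring homomorphism Δ*: ℤ[c_1,c_2,c_3,c_4] → ℤ[c_1',c_2'] determined by Δ*(1 + c_1 + c_2 + c_3 + c_4) = (1 + c_1' + c_2')², i.e. Δ*(c_1) = 2c_1', Δ*(c_2) = 2c_2' + c_1'², Δ*(c_3) = 2c_1'c_2', Δ*(c_4) = c_2'², the elements α_2 = 8c_2 − 3c_1², α_3 = 8c_3 − 4c_1c_2 + c_1³, α_6 = 27c_1²c_4 + 27c_3² − 9c_1c_2c_3 − 72c_2c_4 + 2c_2³ all map into 2·ℤ[c_1',c_2'], and α_4 = 12c_4 − 3c_1c_3 + c_2² maps to (c_1'² − 4c_2')². -/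
import Mathlib


open MvPolynomial

-- Source variables: X 0 = c_1, X 1 = c_2, X 2 = c_3, X 3 = c_4.
-- Target variables: X 0 = c_1', X 1 = c_2'.

/-- Δ* determined by Δ*(1 + c_1 + c_2 + c_3 + c_4) = (1 + c_1' + c_2')². -/
noncomputable def DeltaStar : MvPolynomial (Fin 4) ℤ →ₐ[ℤ] MvPolynomial (Fin 2) ℤ :=
  aeval ![2 * X 0, 2 * X 1 + X 0 ^ 2, 2 * X 0 * X 1, X 1 ^ 2]

noncomputable def alpha2 : MvPolynomial (Fin 4) ℤ := 8 * X 1 - 3 * X 0 ^ 2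
noncomputable def alpha3 : MvPolynomial (Fin 4) ℤ := 8 * X 2 - 4 * X 0 * X 1 + X 0 ^ 3
noncomputable def alpha4 : MvPolynomial (Fin 4) ℤ := 12 * X 3 - 3 * X 0 * X 2 + X 1 ^ 2
noncomputable def alpha6 : MvPolynomial (Fin 4) ℤ :=
  27 * X 0 ^ 2 * X 3 + 27 * X 2 ^ 2 - 9 * X 0 * X 1 * X 2 - 72 * X 1 * X 3 + 2 * X 1 ^ 3

/-- α_2, α_3, α_6 map into 2·ℤ[c_1',c_2'] under Δ*, and Δ*(α_4) = (c_1'² − 4c_2')². -/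
theorem DeltaStar_alphas :
    (∃ g, DeltaStar alpha2 = 2 * g) ∧ (∃ g, DeltaStar alpha3 = 2 * g) ∧
      (∃ g, DeltaStar alpha6 = 2 * g) ∧
      DeltaStar alpha4 = (X 0 ^ 2 - 4 * X 1) ^ 2 := by
    refine ⟨⟨8 * X 1 - 2 * X 0 ^ 2, ?_⟩, ⟨0, ?_⟩,
    ⟨48 * X 0 ^ 2 * X 1 ^ 2 - 12 * X 0 ^ 4 * X 1 - 64 * X 1 ^ 3 + X 0 ^ 6, ?_⟩, ?_⟩ <;>
  simp only [DeltaStar, alpha2, alpha3, alpha4, alpha6, map_add, map_sub, map_mul, map_pow,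
    map_ofNat, aeval_X, Matrix.cons_val_zero, Matrix.cons_val_one, Matrix.head_cons,
    Matrix.cons_val_two, Matrix.tail_cons, Matrix.cons_val_three] <;> ring
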